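/- The space V of permitted colorings of the 4-simplex Δ⁴ = 12345, i.e. the intersection of the kernels of the ten edge functionals φ_{jk} in F^{10}, has dimension 5 over F. -/
import Mathlib


open Finset

/-- position (0-based) of vertex `v` in the increasing order of vertices of `t`. -/
def idx (t : Finset ℕ) (v : ℕ) : ℕ := (t.filter (· < v)).card

/-- coefficient rows of the constant edge functionals on a tetrahedron,
indexed by the (0-based) positions of the two vertices of the edge. -/
def phiRow : ℕ → ℕ → ℤ × ℤ
  | 0, 1 => (0, 1)
  | 0, 2 => (1, -1)
  | 0, 3 => (-1, 0)
  | 1, 2 => (-1, 0)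
  | 1, 3 => (1, 1)
  | 2, 3 => (0, -1)
  | _, _ => (0, 0)

/-- components of the constant edge vectors on a tetrahedron,
indexed by the (0-based) positions of the two vertices of the edge. -/
def psiRow : ℕ → ℕ → ℤ × ℤ
  | 0, 1 => (1, 0)
  | 0, 2 => (-1, 1)
  | 0, 3 => (0, -1)
  | 1, 2 => (0, -1)
  | 1, 3 => (1, 1)
  | 2, 3 => (-1, 0)
  | _, _ => (0, 0)

variable (F : Type) [Field F]

/-- the `x`-component of the color of tetrahedron `t`, as a linear functional. -/
noncomputable def evalX (t : Finset ℕ) : (Finset ℕ → F × F) →ₗ[F] F :=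
  (LinearMap.fst F F F).comp (LinearMap.proj (R := F) (φ := fun _ : Finset ℕ => F × F) t)

/-- the `y`-component of the color of tetrahedron `t`, as a linear functional. -/
noncomputable def evalY (t : Finset ℕ) : (Finset ℕ → F × F) →ₗ[F] F :=
  (LinearMap.snd F F F).comp (LinearMap.proj (R := F) (φ := fun _ : Finset ℕ => F × F) t)

/-- the edge functional `φ_{jk}` of the pentachoron `u`, as a linear functional
on colorings (the tetrahedron opposite vertex `i` contributes with sign `(-1)^(i+1)`,
`i` counted 1-based, i.e. `(-1)^(idx u i)`). -/
noncomputable def phiLin (u : Finset ℕ) (j k : ℕ) : (Finset ℕ → F × F) →ₗ[F] F :=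
  ∑ i ∈ u \ {j, k},
    ((-1 : F) ^ idx u i) •
      ((((phiRow (idx (u.erase i) j) (idx (u.erase i) k)).1 : F) • evalX F (u.erase i)) +
       (((phiRow (idx (u.erase i) j) (idx (u.erase i) k)).2 : F) • evalY F (u.erase i)))

/-- a coloring is permitted on the simplex with vertex set `S` if all edge functionals
of all pentachora (5-element subsets) of `S` annihilate it. -/
def Permitted (S : Finset ℕ) (c : Finset ℕ → F × F) : Prop :=
  ∀ u ⊆ S, u.card = 5 → ∀ j ∈ u, ∀ k ∈ u, j < k → phiLin F u j k c = 0

/-- a coloring is permitted on a cluster `P` of pentachora if all edge functionals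
of all pentachora of `P` annihilate it. -/
def PermittedOn (P : Finset (Finset ℕ)) (c : Finset ℕ → F × F) : Prop :=
  ∀ u ∈ P, ∀ j ∈ u, ∀ k ∈ u, j < k → phiLin F u j k c = 0

/-- the edge vector `ψ_{jk}` (for `j < k`). -/
def psiVec (j k : ℕ) (t : Finset ℕ) : F × F :=
  if j ∈ t ∧ k ∈ t then
    (((psiRow (idx t j) (idx t k)).1 : F), ((psiRow (idx t j) (idx t k)).2 : F))
  else 0

open Classical in
/-- the edge vector `ψ_{jk}` with support cut down to the tetrahedra in `T`. -/
noncomputable def psiC (T : Set (Finset ℕ)) (j k : ℕ) (t : Finset ℕ) : F × F :=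
  if t ∈ T then psiVec F j k t else 0

/-- the submodule of permitted colorings of the simplex with vertex set `S`. -/
noncomputable def PermittedSub (S : Finset ℕ) : Submodule F (Finset ℕ → F × F) :=
  ⨅ (u : Finset ℕ) (_ : u ⊆ S ∧ u.card = 5) (p : ℕ × ℕ)
    (_ : p.1 ∈ u ∧ p.2 ∈ u ∧ p.1 < p.2), LinearMap.ker (phiLin F u p.1 p.2)

/-- the submodule of permitted colorings of a cluster `P` of pentachora. -/
noncomputable def PermittedSubOn (P : Finset (Finset ℕ)) : Submodule F (Finset ℕ → F × F) :=
  ⨅ (u : Finset ℕ) (_ : u ∈ P) (p : ℕ × ℕ)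
    (_ : p.1 ∈ u ∧ p.2 ∈ u ∧ p.1 < p.2), LinearMap.ker (phiLin F u p.1 p.2)

/-- colorings supported on the set `T` of tetrahedra. -/
noncomputable def Supported (T : Set (Finset ℕ)) : Submodule F (Finset ℕ → F × F) :=
  ⨅ (t : Finset ℕ) (_ : t ∉ T),
    LinearMap.ker (LinearMap.proj (R := F) (φ := fun _ : Finset ℕ => F × F) t)

/-- the increasing map identifying vertices `1, …` of `Δⁿ` with the vertices of the
face of `Δ^{n+1}` omitting vertex `k`. -/
def dmap (k i : ℕ) : ℕ := if i < k then i else i + 1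

/-- restriction of a coloring of `Δ^{n+1}` onto its face omitting vertex `k`,
identified order-preservingly with `Δⁿ`. -/
def restr (k : ℕ) (c : Finset ℕ → F × F) : Finset ℕ → F × F :=
  fun t => c (t.image (dmap k))

/-- the hexagon coboundary of an `n`-cochain (a function on colorings of `Δⁿ`). -/
noncomputable def hexδ (n : ℕ) (c : (Finset ℕ → F × F) → F) :
    (Finset ℕ → F × F) → F :=
  fun y => ∑ k ∈ Finset.Icc 1 (n + 2), (-1 : F) ^ (k + 1) * c (restr F k y)

-- auxiliary lemmas

lemma phiLin_apply (u : Finset ℕ) (j k : ℕ) (c : Finset ℕ → F × F) :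
    phiLin F u j k c = ∑ i ∈ u \ {j, k},
      (-1 : F) ^ idx u i *
        (((phiRow (idx (u.erase i) j) (idx (u.erase i) k)).1 : F) * (c (u.erase i)).1 +
         ((phiRow (idx (u.erase i) j) (idx (u.erase i) k)).2 : F) * (c (u.erase i)).2) := by
  simp only [phiLin, LinearMap.sum_apply, LinearMap.smul_apply, LinearMap.add_apply,
    evalX, evalY, LinearMap.comp_apply, LinearMap.proj_apply, LinearMap.fst_apply,
    LinearMap.snd_apply, smul_eq_mul]

lemma idxI1 : idx (Icc 1 5) 1 = 0 := by decide
lemma idxI2 : idx (Icc 1 5) 2 = 1 := by decide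
lemma idxI3 : idx (Icc 1 5) 3 = 2 := by decide
lemma idxI4 : idx (Icc 1 5) 4 = 3 := by decide
lemma idxI5 : idx (Icc 1 5) 5 = 4 := by decide
lemma idxE12 : idx ((Icc 1 5).erase 1) 2 = 0 := by decide
lemma idxE13 : idx ((Icc 1 5).erase 1) 3 = 1 := by decide
lemma idxE14 : idx ((Icc 1 5).erase 1) 4 = 2 := by decide
lemma idxE15 : idx ((Icc 1 5).erase 1) 5 = 3 := by decide
lemma idxE21 : idx ((Icc 1 5).erase 2) 1 = 0 := by decide
lemma idxE23 : idx ((Icc 1 5).erase 2) 3 = 1 := by decide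
lemma idxE24 : idx ((Icc 1 5).erase 2) 4 = 2 := by decide
lemma idxE25 : idx ((Icc 1 5).erase 2) 5 = 3 := by decide
lemma idxE31 : idx ((Icc 1 5).erase 3) 1 = 0 := by decide
lemma idxE32 : idx ((Icc 1 5).erase 3) 2 = 1 := by decide
lemma idxE34 : idx ((Icc 1 5).erase 3) 4 = 2 := by decide
lemma idxE35 : idx ((Icc 1 5).erase 3) 5 = 3 := by decide
lemma idxE41 : idx ((Icc 1 5).erase 4) 1 = 0 := by decide
lemma idxE42 : idx ((Icc 1 5).erase 4) 2 = 1 := by decide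
lemma idxE43 : idx ((Icc 1 5).erase 4) 3 = 2 := by decide
lemma idxE45 : idx ((Icc 1 5).erase 4) 5 = 3 := by decide
lemma idxE51 : idx ((Icc 1 5).erase 5) 1 = 0 := by decide
lemma idxE52 : idx ((Icc 1 5).erase 5) 2 = 1 := by decide
lemma idxE53 : idx ((Icc 1 5).erase 5) 3 = 2 := by decide
lemma idxE54 : idx ((Icc 1 5).erase 5) 4 = 3 := by decide
lemma pr01 : phiRow 0 1 = (0, 1) := rfl
lemma pr02 : phiRow 0 2 = (1, -1) := rfl
lemma pr03 : phiRow 0 3 = (-1, 0) := rfl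
lemma pr12 : phiRow 1 2 = (-1, 0) := rfl
lemma pr13 : phiRow 1 3 = (1, 1) := rfl
lemma pr23 : phiRow 2 3 = (0, -1) := rfl

noncomputable def Phi5 : (Fin 5 → F) →ₗ[F] (Finset ℕ → F × F) where
  toFun v t :=
    if t = (Icc 1 5).erase 1 then (v 0 - v 1 - v 4, v 3 - v 1)
    else if t = (Icc 1 5).erase 2 then (v 0 - v 1, v 2 + v 3 - v 1 - v 4)
    else if t = (Icc 1 5).erase 3 then (v 0, v 2 - v 4)
    else if t = (Icc 1 5).erase 4 then (v 1, v 2)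
    else if t = (Icc 1 5).erase 5 then (v 3, v 4)
    else 0
  map_add' a b := by
    funext t; dsimp only [Pi.add_apply]
    split_ifs <;> apply Prod.ext <;> simp <;> ring
  map_smul' m a := by
    funext t; dsimp only [Pi.smul_apply, RingHom.id_apply]
    split_ifs <;> apply Prod.ext <;> simp <;> ring

lemma Phi5_e1 (v : Fin 5 → F) :
    Phi5 F v ((Icc 1 5).erase 1) = (v 0 - v 1 - v 4, v 3 - v 1) := by
  simp only [Phi5, LinearMap.coe_mk, AddHom.coe_mk]; rw [if_pos trivial]

lemma Phi5_e2 (v : Fin 5 → F) :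
    Phi5 F v ((Icc 1 5).erase 2) = (v 0 - v 1, v 2 + v 3 - v 1 - v 4) := by
  simp only [Phi5, LinearMap.coe_mk, AddHom.coe_mk]
  rw [if_neg (by decide), if_pos trivial]

lemma Phi5_e3 (v : Fin 5 → F) :
    Phi5 F v ((Icc 1 5).erase 3) = (v 0, v 2 - v 4) := by
  simp only [Phi5, LinearMap.coe_mk, AddHom.coe_mk]
  rw [if_neg (by decide), if_neg (by decide), if_pos trivial]

lemma Phi5_e4 (v : Fin 5 → F) :
    Phi5 F v ((Icc 1 5).erase 4) = (v 1, v 2) := by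
  simp only [Phi5, LinearMap.coe_mk, AddHom.coe_mk]
  rw [if_neg (by decide), if_neg (by decide), if_neg (by decide), if_pos trivial]

lemma Phi5_e5 (v : Fin 5 → F) :
    Phi5 F v ((Icc 1 5).erase 5) = (v 3, v 4) := by
  simp only [Phi5, LinearMap.coe_mk, AddHom.coe_mk]
  rw [if_neg (by decide), if_neg (by decide), if_neg (by decide), if_neg (by decide), if_pos trivial]

lemma Phi5_inj : Function.Injective (Phi5 F) := by
  rw [← LinearMap.ker_eq_bot, eq_bot_iff]
  intro v hv
  simp only [LinearMap.mem_ker] at hv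
  have h3 := congrFun hv ((Icc 1 5).erase 3)
  have h4 := congrFun hv ((Icc 1 5).erase 4)
  have h5 := congrFun hv ((Icc 1 5).erase 5)
  rw [Phi5_e3, Pi.zero_apply, Prod.ext_iff] at h3
  rw [Phi5_e4, Pi.zero_apply, Prod.ext_iff] at h4
  rw [Phi5_e5, Pi.zero_apply, Prod.ext_iff] at h5
  simp only [Prod.fst_zero, Prod.snd_zero] at h3 h4 h5
  simp only [Submodule.mem_bot]
  funext i
  fin_cases i <;> simp only [Pi.zero_apply]
  · exact h3.1
  · exact h4.1
  · exact h4.2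
  · exact h5.1
  · exact h5.2


/-- the space of permitted colorings of `Δ⁴ = 12345` (colorings supported
on the five tetrahedra of `Δ⁴` annihilated by the ten edge functionals) has dimension 5. -/
theorem dim_permitted_colorings_pentachoron :
    Module.finrank F
      ↥(PermittedSub F (Icc 1 5) ⊓ Supported F {t | t ⊆ Icc 1 5 ∧ t.card = 4}) = 5 := by
  have hrange : PermittedSub F (Icc 1 5) ⊓ Supported F {t | t ⊆ Icc 1 5 ∧ t.card = 4}
      = LinearMap.range (Phi5 F) := by
    apply le_antisymm
    · intro c hc
      rw [Submodule.mem_inf] at hc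
      obtain ⟨hP, hS⟩ := hc
      simp only [PermittedSub, Submodule.mem_iInf, LinearMap.mem_ker] at hP
      simp only [Supported, Submodule.mem_iInf, LinearMap.mem_ker, Set.mem_setOf_eq,
        LinearMap.proj_apply] at hS
      have e12 := hP (Icc 1 5) ⟨subset_rfl, by decide⟩ (1, 2) ⟨by decide, by decide, by decide⟩
      have e13 := hP (Icc 1 5) ⟨subset_rfl, by decide⟩ (1, 3) ⟨by decide, by decide, by decide⟩
      have e14 := hP (Icc 1 5) ⟨subset_rfl, by decide⟩ (1, 4) ⟨by decide, by decide, by decide⟩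
      have e23 := hP (Icc 1 5) ⟨subset_rfl, by decide⟩ (2, 3) ⟨by decide, by decide, by decide⟩
      have e24 := hP (Icc 1 5) ⟨subset_rfl, by decide⟩ (2, 4) ⟨by decide, by decide, by decide⟩
      rw [phiLin_apply, show (Icc 1 5 : Finset ℕ) \ {1, 2} = {3, 4, 5} from by decide,
        Finset.sum_insert (by decide), Finset.sum_insert (by decide),
        Finset.sum_singleton] at e12
      rw [phiLin_apply, show (Icc 1 5 : Finset ℕ) \ {1, 3} = {2, 4, 5} from by decide,
        Finset.sum_insert (by decide), Finset.sum_insert (by decide),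
        Finset.sum_singleton] at e13
      rw [phiLin_apply, show (Icc 1 5 : Finset ℕ) \ {1, 4} = {2, 3, 5} from by decide,
        Finset.sum_insert (by decide), Finset.sum_insert (by decide),
        Finset.sum_singleton] at e14
      rw [phiLin_apply, show (Icc 1 5 : Finset ℕ) \ {2, 3} = {1, 4, 5} from by decide,
        Finset.sum_insert (by decide), Finset.sum_insert (by decide),
        Finset.sum_singleton] at e23
      rw [phiLin_apply, show (Icc 1 5 : Finset ℕ) \ {2, 4} = {1, 3, 5} from by decide,
        Finset.sum_insert (by decide), Finset.sum_insert (by decide),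
        Finset.sum_singleton] at e24
      simp only [idxI1, idxI2, idxI3, idxI4, idxI5, idxE12, idxE13, idxE14, idxE15, idxE21,
        idxE23, idxE24, idxE25, idxE31, idxE32, idxE34, idxE35, idxE41, idxE42, idxE43,
        idxE45, idxE51, idxE52, idxE53, idxE54, pr01, pr02, pr03, pr12, pr13, pr23]
        at e12 e13 e14 e23 e24
      refine ⟨![(c ((Icc 1 5).erase 3)).1, (c ((Icc 1 5).erase 4)).1,
        (c ((Icc 1 5).erase 4)).2, (c ((Icc 1 5).erase 5)).1, (c ((Icc 1 5).erase 5)).2], ?_⟩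
      funext t
      by_cases h1 : t = (Icc 1 5).erase 1
      · subst h1
        rw [Phi5_e1, Prod.ext_iff]
        constructor <;> simp only [Matrix.cons_val_zero, Matrix.cons_val_one, Matrix.head_cons,
          Matrix.cons_val_two, Matrix.tail_cons, Matrix.cons_val_three, Matrix.cons_val_four]
        · linear_combination -e23 - e24
        · linear_combination -e23
      · by_cases h2 : t = (Icc 1 5).erase 2
        · subst h2
          rw [Phi5_e2, Prod.ext_iff]
          constructor <;> simp only [Matrix.cons_val_zero, Matrix.cons_val_one, Matrix.head_cons,
            Matrix.cons_val_two, Matrix.tail_cons, Matrix.cons_val_three, Matrix.cons_val_four]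
          · linear_combination e12 + e13 + e14
          · linear_combination e13
        · by_cases h3 : t = (Icc 1 5).erase 3
          · subst h3
            rw [Phi5_e3, Prod.ext_iff]
            constructor <;> simp only [Matrix.cons_val_zero, Matrix.cons_val_one,
              Matrix.head_cons, Matrix.cons_val_two, Matrix.tail_cons, Matrix.cons_val_three,
              Matrix.cons_val_four]
            linear_combination -e12
          · by_cases h4 : t = (Icc 1 5).erase 4
            · subst h4
              rw [Phi5_e4, Prod.ext_iff]
              constructor <;> simp
            · by_cases h5 : t = (Icc 1 5).erase 5
              · subst h5
                rw [Phi5_e5, Prod.ext_iff]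
                constructor <;> simp
              · have hz : ∀ w : Fin 5 → F, Phi5 F w t = 0 := by
                  intro w
                  simp only [Phi5, LinearMap.coe_mk, AddHom.coe_mk]
                  rw [if_neg h1, if_neg h2, if_neg h3, if_neg h4, if_neg h5]
                rw [hz]
                refine (hS t ?_).symm
                rintro ⟨hsub, hcard⟩
                have hm : t ∈ (Icc 1 5).powersetCard 4 := Finset.mem_powersetCard.2 ⟨hsub, hcard⟩
                rw [show (Icc 1 5).powersetCard 4 = {(Icc 1 5).erase 1, (Icc 1 5).erase 2,
                  (Icc 1 5).erase 3, (Icc 1 5).erase 4, (Icc 1 5).erase 5} from by decide] at hm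
                simp only [Finset.mem_insert, Finset.mem_singleton] at hm
                tauto
    · rintro _ ⟨v, rfl⟩
      rw [Submodule.mem_inf]
      constructor
      · simp only [PermittedSub, Submodule.mem_iInf, LinearMap.mem_ker]
        rintro u ⟨hsub, hcard⟩ ⟨j, k⟩ ⟨hj, hk, hjk⟩
        have hu : u = Icc 1 5 := Finset.eq_of_subset_of_card_le hsub (by simp [hcard])
        subst hu
        rw [Finset.mem_Icc] at hj hk
        obtain ⟨hj1, hj2⟩ := hj
        obtain ⟨hk1, hk2⟩ := hk
        interval_cases j <;> interval_cases k <;>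
          first
          | omega
          | (first
             | rw [phiLin_apply, show (Icc 1 5 : Finset ℕ) \ {1, 2} = {3, 4, 5} from by decide,
                 Finset.sum_insert (by decide), Finset.sum_insert (by decide),
                 Finset.sum_singleton]
             | rw [phiLin_apply, show (Icc 1 5 : Finset ℕ) \ {1, 3} = {2, 4, 5} from by decide,
                 Finset.sum_insert (by decide), Finset.sum_insert (by decide),
                 Finset.sum_singleton]
             | rw [phiLin_apply, show (Icc 1 5 : Finset ℕ) \ {1, 4} = {2, 3, 5} from by decide,
                 Finset.sum_insert (by decide), Finset.sum_insert (by decide),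
                 Finset.sum_singleton]
             | rw [phiLin_apply, show (Icc 1 5 : Finset ℕ) \ {1, 5} = {2, 3, 4} from by decide,
                 Finset.sum_insert (by decide), Finset.sum_insert (by decide),
                 Finset.sum_singleton]
             | rw [phiLin_apply, show (Icc 1 5 : Finset ℕ) \ {2, 3} = {1, 4, 5} from by decide,
                 Finset.sum_insert (by decide), Finset.sum_insert (by decide),
                 Finset.sum_singleton]
             | rw [phiLin_apply, show (Icc 1 5 : Finset ℕ) \ {2, 4} = {1, 3, 5} from by decide,
                 Finset.sum_insert (by decide), Finset.sum_insert (by decide),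
                 Finset.sum_singleton]
             | rw [phiLin_apply, show (Icc 1 5 : Finset ℕ) \ {2, 5} = {1, 3, 4} from by decide,
                 Finset.sum_insert (by decide), Finset.sum_insert (by decide),
                 Finset.sum_singleton]
             | rw [phiLin_apply, show (Icc 1 5 : Finset ℕ) \ {3, 4} = {1, 2, 5} from by decide,
                 Finset.sum_insert (by decide), Finset.sum_insert (by decide),
                 Finset.sum_singleton]
             | rw [phiLin_apply, show (Icc 1 5 : Finset ℕ) \ {3, 5} = {1, 2, 4} from by decide,
                 Finset.sum_insert (by decide), Finset.sum_insert (by decide),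
                 Finset.sum_singleton]
             | rw [phiLin_apply, show (Icc 1 5 : Finset ℕ) \ {4, 5} = {1, 2, 3} from by decide,
                 Finset.sum_insert (by decide), Finset.sum_insert (by decide),
                 Finset.sum_singleton]
             simp only [idxI1, idxI2, idxI3, idxI4, idxI5, idxE12, idxE13, idxE14, idxE15,
               idxE21, idxE23, idxE24, idxE25, idxE31, idxE32, idxE34, idxE35, idxE41, idxE42,
               idxE43, idxE45, idxE51, idxE52, idxE53, idxE54, pr01, pr02, pr03, pr12, pr13,
               pr23, Phi5_e1, Phi5_e2, Phi5_e3, Phi5_e4, Phi5_e5]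
             push_cast
             ring)
      · simp only [Supported, Submodule.mem_iInf, LinearMap.mem_ker, Set.mem_setOf_eq,
          LinearMap.proj_apply]
        intro t ht
        simp only [Phi5, LinearMap.coe_mk, AddHom.coe_mk]
        split_ifs with h1 h2 h3 h4 h5
        · exact absurd ⟨h1 ▸ Finset.erase_subset _ _, h1 ▸ by decide⟩ ht
        · exact absurd ⟨h2 ▸ Finset.erase_subset _ _, h2 ▸ by decide⟩ ht
        · exact absurd ⟨h3 ▸ Finset.erase_subset _ _, h3 ▸ by decide⟩ ht
        · exact absurd ⟨h4 ▸ Finset.erase_subset _ _, h4 ▸ by decide⟩ ht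
        · exact absurd ⟨h5 ▸ Finset.erase_subset _ _, h5 ▸ by decide⟩ ht
        · rfl
  rw [hrange, LinearMap.finrank_range_of_inj (Phi5_inj F), Module.finrank_fin_fun]
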